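/- arXiv:2410.13050 — 3 statements merged into one kernel-verified Lean document; each statement's English description precedes it below -/
import Mathlib

section
/- For all c in (0,1) and alpha > 0, the function (a,b) -> Beta(c | a,b) = c^{a-1}(1-c)^{b-1}/B(a,b) attains a maximum on the set {(a,b) : a,b > 0, a+b = alpha}. -/
/-- The Beta(a,b) density evaluated at c. -/
noncomputable def betaDensityAt (c a b : ℝ) : ℝ :=
  c ^ (a - 1) * (1 - c) ^ (b - 1) * Real.Gamma (a + b) / (Real.Gamma a * Real.Gamma b)

lemma continuous_real_inv_Gamma : Continuous fun x : ℝ => (Real.Gamma x)⁻¹ := by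
  have : (fun x : ℝ => (Real.Gamma x)⁻¹) =
      fun x : ℝ => ((Complex.Gamma (x : ℂ))⁻¹).re := by
    funext x
    rw [Complex.Gamma_ofReal]
    simp [← Complex.ofReal_inv]
  rw [this]
  exact Complex.continuous_re.comp
    (Complex.differentiable_one_div_Gamma.continuous.comp Complex.continuous_ofReal)

/-- For c ∈ (0,1) and α > 0, the Beta density at c attains a maximum over
{(a,b) : a, b > 0, a + b = α}, i.e. over the open segment {(a, α - a) : 0 < a < α}. -/
theorem beta_density_max_exists_fixed_concentration (c α : ℝ)
    (hc : c ∈ Set.Ioo (0 : ℝ) 1) (hα : 0 < α) :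
    ∃ a ∈ Set.Ioo (0 : ℝ) α, ∀ a' ∈ Set.Ioo (0 : ℝ) α,
      betaDensityAt c a' (α - a') ≤ betaDensityAt c a (α - a) := by
  obtain ⟨hc0, hc1⟩ := hc
  have hc1' : (0:ℝ) < 1 - c := by linarith
  set F : ℝ → ℝ := fun a =>
    c ^ (a - 1) * (1 - c) ^ (α - a - 1) * Real.Gamma α *
      ((Real.Gamma a)⁻¹ * (Real.Gamma (α - a))⁻¹) with hF
  have hFeq : ∀ a ∈ Set.Ioo (0:ℝ) α, betaDensityAt c a (α - a) = F a := by
    intro a ha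
    have : a + (α - a) = α := by ring
    rw [betaDensityAt, this, hF]
    rw [div_eq_mul_inv, mul_inv]
  have hFcont : Continuous F := by
    apply Continuous.mul
    · apply Continuous.mul
      · apply Continuous.mul
        · have h1 : Continuous fun x : ℝ => Real.exp (Real.log c * (x - 1)) :=
            Real.continuous_exp.comp (continuous_const.mul (continuous_id.sub continuous_const))
          exact h1.congr fun x => (Real.rpow_def_of_pos hc0 _).symm
        · have h1 : Continuous fun x : ℝ => Real.exp (Real.log (1 - c) * (α - x - 1)) :=
            Real.continuous_exp.comp (continuous_const.mul
              ((continuous_const.sub continuous_id).sub continuous_const))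
          exact h1.congr fun x => (Real.rpow_def_of_pos hc1' _).symm
      · exact continuous_const
    · exact (continuous_real_inv_Gamma.comp continuous_id).mul
        (continuous_real_inv_Gamma.comp (continuous_const.sub continuous_id))
  have hcomp : IsCompact (Set.Icc (0:ℝ) α) := isCompact_Icc
  obtain ⟨a, haIcc, hmax⟩ := hcomp.exists_isMaxOn ⟨0, by constructor <;> [rfl; exact le_of_lt hα]⟩
    hFcont.continuousOn
  have hhalf : α / 2 ∈ Set.Icc (0:ℝ) α := ⟨by linarith, by linarith⟩
  have hFhalf : 0 < F (α / 2) := by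
    apply mul_pos
    apply mul_pos
    apply mul_pos
    · exact Real.rpow_pos_of_pos hc0 _
    · exact Real.rpow_pos_of_pos hc1' _
    · exact Real.Gamma_pos_of_pos hα
    · have h2 : (0:ℝ) < α / 2 := by linarith
      have : α - α / 2 = α / 2 := by ring
      rw [this]
      exact mul_pos (inv_pos.mpr (Real.Gamma_pos_of_pos h2))
        (inv_pos.mpr (Real.Gamma_pos_of_pos h2))
  have hFa : 0 < F a := lt_of_lt_of_le hFhalf (hmax hhalf)
  have ha0 : a ≠ 0 := by
    rintro rfl
    simp [hF, Real.Gamma_zero] at hFa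
  have haα : a ≠ α := by
    rintro rfl
    simp [hF, Real.Gamma_zero] at hFa
  have haIoo : a ∈ Set.Ioo (0:ℝ) α :=
    ⟨lt_of_le_of_ne haIcc.1 (Ne.symm ha0), lt_of_le_of_ne haIcc.2 haα⟩
  refine ⟨a, haIoo, fun a' ha' => ?_⟩
  rw [hFeq a' ha', hFeq a haIoo]
  exact hmax (Set.Ioo_subset_Icc_self ha')
end

section
/- For all c in (0,1) and v in (0,1/4), there exists a pair (a,b) with a,b > 0 and V(a,b) = v maximizing the Beta density at c over the constraint set {(a,b): a,b>0, V(a,b)=v}, i.e., the supremum of Beta(c | a,b) over this set is attained. -/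
/-- The variance of the Beta(a,b) distribution. -/
noncomputable def betaVar (a b : ℝ) : ℝ := a * b / ((a + b) ^ 2 * (a + b + 1))

/-- Continuous extension of the beta density to the closed quadrant. -/
noncomputable def betaF (c : ℝ) (p : ℝ × ℝ) : ℝ :=
  c ^ (p.1 - 1) * (1 - c) ^ (p.2 - 1) * Real.Gamma (p.1 + p.2 + 1) /
    (Real.Gamma (p.1 + 1) * Real.Gamma (p.2 + 1)) * (p.1 * p.2 / (p.1 + p.2))

lemma betaF_eq (c : ℝ) {a b : ℝ} (ha : 0 < a) (hb : 0 < b) :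
    betaF c (a, b) = betaDensityAt c a b := by
  have hA := Real.Gamma_pos_of_pos ha
  have hB := Real.Gamma_pos_of_pos hb
  have h1 : Real.Gamma (a + 1) = a * Real.Gamma a := Real.Gamma_add_one ha.ne'
  have h2 : Real.Gamma (b + 1) = b * Real.Gamma b := Real.Gamma_add_one hb.ne'
  have h3 : Real.Gamma (a + b + 1) = (a + b) * Real.Gamma (a + b) :=
    Real.Gamma_add_one (by positivity)
  simp only [betaF, betaDensityAt, h1, h2, h3]
  have : a + b ≠ 0 := by positivity
  field_simp

lemma continuous_rpow_base {c : ℝ} (hc : 0 < c) : Continuous fun x : ℝ => c ^ x := by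
  have : (fun x : ℝ => c ^ x) = fun x => Real.exp (Real.log c * x) := by
    funext x; rw [Real.rpow_def_of_pos hc]
  rw [this]
  exact Real.continuous_exp.comp (continuous_const.mul continuous_id)

lemma continuousAt_Gamma_pos {x : ℝ} (hx : 0 < x) : ContinuousAt Real.Gamma x := by
  refine (Real.differentiableAt_Gamma fun m => ?_).continuousAt
  intro h
  have : (0:ℝ) < -(m:ℝ) := h ▸ hx
  have : (0:ℝ) ≤ (m:ℝ) := Nat.cast_nonneg m
  linarith

lemma betaF_continuousOn {c : ℝ} (hc : c ∈ Set.Ioo (0:ℝ) 1) :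
    ContinuousOn (betaF c) {p : ℝ × ℝ | 0 ≤ p.1 ∧ 0 ≤ p.2} := by
  set Q : Set (ℝ × ℝ) := {p : ℝ × ℝ | 0 ≤ p.1 ∧ 0 ≤ p.2}
  have hc1 : (0:ℝ) < 1 - c := by linarith [hc.2]
  have hg1 : Continuous fun p : ℝ × ℝ => c ^ (p.1 - 1) :=
    (continuous_rpow_base hc.1).comp (continuous_fst.sub continuous_const)
  have hg2 : Continuous fun p : ℝ × ℝ => (1 - c) ^ (p.2 - 1) :=
    (continuous_rpow_base hc1).comp (continuous_snd.sub continuous_const)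
  have hg3 : ContinuousOn (fun p : ℝ × ℝ => Real.Gamma (p.1 + p.2 + 1)) Q := by
    intro p hp
    exact ((continuousAt_Gamma_pos (by have h1 := hp.1; have h2 := hp.2; show (0:ℝ) < p.1 + p.2 + 1; linarith)).comp
      (((continuous_fst.add continuous_snd).add continuous_const).continuousAt)).continuousWithinAt
  have hg4 : ContinuousOn (fun p : ℝ × ℝ => Real.Gamma (p.1 + 1) * Real.Gamma (p.2 + 1)) Q := by
    intro p hp
    have h1 : ContinuousAt (fun p : ℝ × ℝ => Real.Gamma (p.1 + 1)) p :=
      (continuousAt_Gamma_pos (by linarith [hp.1])).comp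
        ((continuous_fst.add continuous_const).continuousAt)
    have h2 : ContinuousAt (fun p : ℝ × ℝ => Real.Gamma (p.2 + 1)) p :=
      (continuousAt_Gamma_pos (by linarith [hp.2])).comp
        ((continuous_snd.add continuous_const).continuousAt)
    exact (h1.mul h2).continuousWithinAt
  have hg4ne : ∀ p ∈ Q, Real.Gamma (p.1 + 1) * Real.Gamma (p.2 + 1) ≠ 0 := by
    intro p hp
    have := Real.Gamma_pos_of_pos (show (0:ℝ) < p.1 + 1 by linarith [hp.1])
    have := Real.Gamma_pos_of_pos (show (0:ℝ) < p.2 + 1 by linarith [hp.2])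
    positivity
  have hg5 : ContinuousOn (fun p : ℝ × ℝ => p.1 * p.2 / (p.1 + p.2)) Q := by
    intro p hp
    by_cases hps : p.1 + p.2 = 0
    · -- p = (0,0); squeeze
      have hp1 : p.1 = 0 := by have h1 := hp.1; have h2 := hp.2; linarith
      have hp2 : p.2 = 0 := by have h1 := hp.1; have h2 := hp.2; linarith
      have hval : p.1 * p.2 / (p.1 + p.2) = 0 := by rw [hp1, hp2]; simp
      rw [ContinuousWithinAt, hval]
      have hbound : ∀ q ∈ Q, q.1 * q.2 / (q.1 + q.2) ≤ q.1 := by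
        intro q hq
        by_cases h : q.1 + q.2 = 0
        · rw [h]; simp [hq.1]
        · have hs : 0 < q.1 + q.2 := lt_of_le_of_ne (add_nonneg hq.1 hq.2) (Ne.symm h)
          rw [div_le_iff₀ hs]
          nlinarith [hq.1, hq.2]
      have hnn : ∀ q ∈ Q, 0 ≤ q.1 * q.2 / (q.1 + q.2) := by
        intro q hq; exact div_nonneg (mul_nonneg hq.1 hq.2) (add_nonneg hq.1 hq.2)
      have htend : Filter.Tendsto (fun q : ℝ × ℝ => q.1) (nhdsWithin p Q) (nhds 0) := by
        have := (continuous_fst.tendsto p).mono_left (nhdsWithin_le_nhds (s := Q))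
        rwa [hp1] at this
      refine squeeze_zero' ?_ ?_ htend
      · exact Filter.eventually_iff_exists_mem.mpr ⟨Q, self_mem_nhdsWithin, hnn⟩
      · exact Filter.eventually_iff_exists_mem.mpr ⟨Q, self_mem_nhdsWithin, hbound⟩
    · exact ((continuous_fst.mul continuous_snd).continuousAt.div
        ((continuous_fst.add continuous_snd).continuousAt) hps).continuousWithinAt
  exact ((((hg1.mul hg2).continuousOn.mul hg3).div hg4 hg4ne).mul hg5)

/-- For all c ∈ (0,1) and v ∈ (0,1/4), the supremum of the Beta density at c over
{(a,b) : a, b > 0, V(a,b) = v} is attained. -/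
theorem beta_density_max_exists_fixed_variance (c v : ℝ)
    (hc : c ∈ Set.Ioo (0 : ℝ) 1) (hv : v ∈ Set.Ioo (0 : ℝ) (1 / 4)) :
    ∃ a b : ℝ, 0 < a ∧ 0 < b ∧ betaVar a b = v ∧
      ∀ a' b' : ℝ, 0 < a' → 0 < b' → betaVar a' b' = v →
        betaDensityAt c a' b' ≤ betaDensityAt c a b := by
  obtain ⟨hv0, hv4⟩ := hv
  set S : Set (ℝ × ℝ) := {p : ℝ × ℝ | 0 < p.1 ∧ 0 < p.2 ∧ betaVar p.1 p.2 = v} with hS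
  set M : ℝ := 1 / (4 * v) with hM
  have hM0 : 0 < M := by positivity
  set Q : Set (ℝ × ℝ) := {p : ℝ × ℝ | 0 ≤ p.1 ∧ 0 ≤ p.2} with hQ
  -- S is contained in a compact box
  have hSbox : S ⊆ Set.Icc (0:ℝ) M ×ˢ Set.Icc (0:ℝ) M := by
    rintro ⟨a, b⟩ ⟨ha, hb, hvab⟩
    dsimp at ha hb hvab ⊢
    have hs : 0 < a + b := by linarith
    have hden : (0:ℝ) < (a + b) ^ 2 * (a + b + 1) := by positivity
    have heq : a * b = v * ((a + b) ^ 2 * (a + b + 1)) := by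
      rw [betaVar] at hvab
      field_simp at hvab
      linarith
    have key : v * (a + b + 1) ≤ 1 / 4 := by
      nlinarith [sq_nonneg (a - b), sq_nonneg (a + b), mul_pos hs hs]
    have hsum : a + b + 1 ≤ M := by
      rw [hM, le_div_iff₀ (by positivity : (0:ℝ) < 4 * v)]
      linarith
    exact ⟨⟨ha.le, by linarith⟩, ⟨hb.le, by linarith⟩⟩
  -- S is nonempty
  have ha0 : 0 < (1 / (4 * v) - 1) / 2 := by
    have : 4 * v < 1 := by linarith
    have h1 : 1 < 1 / (4 * v) := (one_lt_div (by positivity)).mpr this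
    linarith
  set a0 : ℝ := (1 / (4 * v) - 1) / 2 with ha0def
  have hvaa : betaVar a0 a0 = v := by
    rw [betaVar]
    have h1 : a0 + a0 + 1 = 1 / (4 * v) := by rw [ha0def]; ring
    rw [h1]
    field_simp
    ring
  have hp0S : ((a0, a0) : ℝ × ℝ) ∈ S := ⟨ha0, ha0, hvaa⟩
  -- closure S is compact
  have hbox : IsCompact (Set.Icc (0:ℝ) M ×ˢ Set.Icc (0:ℝ) M) :=
    isCompact_Icc.prod isCompact_Icc
  have hclS : closure S ⊆ Set.Icc (0:ℝ) M ×ˢ Set.Icc (0:ℝ) M :=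
    closure_minimal hSbox (hbox.isClosed)
  have hcomp : IsCompact (closure S) := hbox.of_isClosed_subset isClosed_closure hclS
  -- closure S ⊆ Q
  have hQclosed : IsClosed Q := by
    rw [hQ]
    exact (isClosed_le continuous_const continuous_fst).inter
      (isClosed_le continuous_const continuous_snd)
  have hSQ : S ⊆ Q := fun p hp => ⟨hp.1.le, hp.2.1.le⟩
  have hclQ : closure S ⊆ Q := closure_minimal hSQ hQclosed
  -- maximum of betaF on closure S
  have hcont : ContinuousOn (betaF c) (closure S) := (betaF_continuousOn hc).mono hclQ
  obtain ⟨x, hxcl, hxmax⟩ := hcomp.exists_isMaxOn ⟨(a0, a0), subset_closure hp0S⟩ hcont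
  -- betaF positive at (a0, a0)
  have hFp0 : 0 < betaF c (a0, a0) := by
    rw [betaF_eq c ha0 ha0, betaDensityAt]
    have h1 := Real.rpow_pos_of_pos hc.1 (a0 - 1)
    have h2 := Real.rpow_pos_of_pos (show (0:ℝ) < 1 - c by linarith [hc.2]) (a0 - 1)
    have h3 := Real.Gamma_pos_of_pos (show (0:ℝ) < a0 + a0 by linarith)
    have h4 := Real.Gamma_pos_of_pos ha0
    positivity
  have hFx : 0 < betaF c x := lt_of_lt_of_le hFp0 (hxmax (subset_closure hp0S))
  -- x has positive coordinates
  have hx1 : 0 < x.1 := by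
    rcases lt_or_eq_of_le (hclQ hxcl).1 with h | h
    · exact h
    · exfalso
      have : betaF c x = 0 := by rw [betaF, ← h]; simp
      rw [this] at hFx; exact lt_irrefl 0 hFx
  have hx2 : 0 < x.2 := by
    rcases lt_or_eq_of_le (hclQ hxcl).2 with h | h
    · exact h
    · exfalso
      have : betaF c x = 0 := by rw [betaF, ← h]; simp
      rw [this] at hFx; exact lt_irrefl 0 hFx
  -- betaVar x.1 x.2 = v by continuity
  have hvx : betaVar x.1 x.2 = v := by
    have hcV : ContinuousAt (fun p : ℝ × ℝ => betaVar p.1 p.2) x := by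
      have hden : ((x.1 + x.2) ^ 2 * (x.1 + x.2 + 1)) ≠ 0 := by positivity
      exact (continuous_fst.mul continuous_snd).continuousAt.div
        (by fun_prop) hden
    have hne : (nhdsWithin x S).NeBot := mem_closure_iff_nhdsWithin_neBot.mp hxcl
    have h1 : Filter.Tendsto (fun p : ℝ × ℝ => betaVar p.1 p.2) (nhdsWithin x S)
        (nhds (betaVar x.1 x.2)) := hcV.continuousWithinAt
    have h2 : Filter.Tendsto (fun p : ℝ × ℝ => betaVar p.1 p.2) (nhdsWithin x S)
        (nhds v) := by
      apply Filter.Tendsto.congr' _ tendsto_const_nhds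
      filter_upwards [self_mem_nhdsWithin] with p hp
      exact hp.2.2.symm
    exact tendsto_nhds_unique h1 h2
  refine ⟨x.1, x.2, hx1, hx2, hvx, fun a' b' ha' hb' hv' => ?_⟩
  have hmem : ((a', b') : ℝ × ℝ) ∈ S := ⟨ha', hb', hv'⟩
  have h2 : betaF c (a', b') ≤ betaF c x := hxmax (subset_closure hmem)
  have hx : betaF c (x.1, x.2) = betaDensityAt c x.1 x.2 := betaF_eq c hx1 hx2
  rw [Prod.mk.eta] at hx
  rw [← betaF_eq c ha' hb', ← hx]
  exact h2
end

section
/- The Hessian of the negative log Dirichlet density at fixed c, as a function of the parameters a_1,...,a_K, has (i,j) entry psi'(a_i) 1(i=j) - psi'(sum_k a_k), where psi' is the trigamma function, and this Hessian matrix is positive semidefinite; in particular the negative log Dirichlet density is convex in a. -/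
/-- The digamma function, the derivative of log Γ. -/
noncomputable def digamma (x : ℝ) : ℝ := deriv (fun y => Real.log (Real.Gamma y)) x

/-- The trigamma function, the second derivative of log Γ. -/
noncomputable def trigamma (x : ℝ) : ℝ := deriv digamma x

/-- The negative log Dirichlet density at a point c, as a function of the parameters a. -/
noncomputable def negLogDirichlet {K : ℕ} (c a : Fin K → ℝ) : ℝ :=
  (∑ i, Real.log (Real.Gamma (a i))) - Real.log (Real.Gamma (∑ i, a i)) -
    ∑ i, (a i - 1) * Real.log (c i)

section Aux
open Real Set Filter MeasureTheory

lemma analyticAt_complex_Gamma {z : ℂ} (hz : 0 < z.re) : AnalyticAt ℂ Complex.Gamma z := by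
  have hopen : IsOpen {w : ℂ | 0 < w.re} := isOpen_lt continuous_const Complex.continuous_re
  have hd : DifferentiableOn ℂ Complex.Gamma {w : ℂ | 0 < w.re} := by
    intro w hw
    refine (Complex.differentiableAt_Gamma w fun m => ?_).differentiableWithinAt
    intro h
    rw [h] at hw
    simp only [Set.mem_setOf_eq, Complex.neg_re, Complex.natCast_re] at hw
    have : (0:ℝ) ≤ m := Nat.cast_nonneg m
    linarith
  exact hd.analyticAt (hopen.mem_nhds hz)

lemma analyticAt_Gamma {x : ℝ} (hx : 0 < x) : AnalyticAt ℝ Real.Gamma x := by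
  have h1 : AnalyticAt ℝ (fun y : ℝ => (Complex.Gamma (y : ℂ)).re) x := by
    apply (Complex.reCLM.analyticAt _).comp
    exact ((analyticAt_complex_Gamma (by simpa using hx)).restrictScalars).comp
      (Complex.ofRealCLM.analyticAt x)
  have : (fun y : ℝ => (Complex.Gamma (y : ℂ)).re) = Real.Gamma := by
    funext y; rw [Complex.Gamma_ofReal]; simp
  rwa [this] at h1

lemma analyticAt_derivGamma {x : ℝ} (hx : 0 < x) : AnalyticAt ℝ (deriv Real.Gamma) x := by
  have h : AnalyticOnNhd ℝ Real.Gamma (Ioi 0) := fun y hy => analyticAt_Gamma hy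
  exact h.deriv x hx

lemma hasDerivAt_logGamma {x : ℝ} (hx : 0 < x) :
    HasDerivAt (fun y => Real.log (Real.Gamma y)) (deriv Real.Gamma x / Real.Gamma x) x :=
  ((analyticAt_Gamma hx).differentiableAt.hasDerivAt).log (Real.Gamma_pos_of_pos hx).ne'

lemma digamma_eq {x : ℝ} (hx : 0 < x) : digamma x = deriv Real.Gamma x / Real.Gamma x :=
  (hasDerivAt_logGamma hx).deriv

lemma hasDerivAt_logGamma' {x : ℝ} (hx : 0 < x) :
    HasDerivAt (fun y => Real.log (Real.Gamma y)) (digamma x) x := by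
  rw [digamma_eq hx]; exact hasDerivAt_logGamma hx

lemma differentiableAt_digamma {x : ℝ} (hx : 0 < x) : DifferentiableAt ℝ digamma x := by
  have heq : digamma =ᶠ[nhds x] fun y => deriv Real.Gamma y / Real.Gamma y := by
    filter_upwards [eventually_gt_nhds hx] with y hy
    exact digamma_eq hy
  have hd : DifferentiableAt ℝ (fun y => deriv Real.Gamma y / Real.Gamma y) x :=
    (analyticAt_derivGamma hx).differentiableAt.div
      (analyticAt_Gamma hx).differentiableAt (Real.Gamma_pos_of_pos hx).ne'
  exact hd.congr_of_eventuallyEq heq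

lemma hasDerivAt_digamma {x : ℝ} (hx : 0 < x) : HasDerivAt digamma (trigamma x) x :=
  (differentiableAt_digamma hx).hasDerivAt

lemma part1_deriv {K : ℕ} (c a : Fin K → ℝ) (ha : ∀ i, 0 < a i) (i j : Fin K) :
    HasDerivAt
      (fun t =>
        digamma (Function.update a j t i) - digamma (∑ k, Function.update a j t k) -
          Real.log (c i))
      (trigamma (a i) * (if i = j then 1 else 0) - trigamma (∑ k, a k)) (a j) := by
  have hj : j ∈ Finset.univ := Finset.mem_univ j
  set C := ∑ k ∈ Finset.univ \ {j}, a k with hC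
  have hsum_eq : ∀ t : ℝ, (∑ k, Function.update a j t k) = t + C := fun t =>
    Finset.sum_update_of_mem hj a t
  have hs_eq : (∑ k, a k) = a j + C := by
    rw [hC, ← Finset.erase_eq]; exact (Finset.add_sum_erase _ a hj).symm
  have hC0 : 0 ≤ C := Finset.sum_nonneg fun k _ => (ha k).le
  have hs : 0 < ∑ k, a k := by rw [hs_eq]; linarith [ha j]
  have h2 : HasDerivAt (fun t => digamma (∑ k, Function.update a j t k))
      (trigamma (∑ k, a k)) (a j) := by
    have hd : HasDerivAt digamma (trigamma (∑ k, a k)) (a j + C) := by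
      rw [← hs_eq]; exact hasDerivAt_digamma hs
    have := hd.comp (a j) ((hasDerivAt_id (a j)).add_const C)
    simp only [Function.comp_def, mul_one, id_eq] at this
    simpa only [hsum_eq] using this
  have h1 : HasDerivAt (fun t => digamma (Function.update a j t i))
      (trigamma (a i) * (if i = j then 1 else 0)) (a j) := by
    rcases eq_or_ne i j with h | h
    · subst h
      simp only [Function.update_self]
      simpa using hasDerivAt_digamma (ha i)
    · simp only [if_neg h, mul_zero]
      have : (fun t => digamma (Function.update a j t i)) = fun _ => digamma (a i) := by
        funext t; rw [Function.update_of_ne h]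
      rw [this]; exact hasDerivAt_const _ _
  exact (h1.sub h2).sub_const _

/-- The real Beta function as an integral over `Ioo 0 1`. -/
noncomputable def realBeta (u v : ℝ) : ℝ :=
  ∫ x in Ioo (0:ℝ) 1, x ^ (u - 1) * (1 - x) ^ (v - 1)

lemma complex_betaIntegral_eq (u v : ℝ) (hu : 0 < u) (hv : 0 < v) :
    Complex.betaIntegral u v = (realBeta u v : ℂ) := by
  rw [Complex.betaIntegral]
  rw [intervalIntegral.integral_of_le (by norm_num : (0:ℝ) ≤ 1)]
  rw [MeasureTheory.integral_Ioc_eq_integral_Ioo]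
  rw [realBeta]
  have h1 : ∀ x ∈ Ioo (0:ℝ) 1, ((x:ℂ)) ^ ((u:ℂ) - 1) * (1 - (x:ℂ)) ^ ((v:ℂ) - 1)
      = ((x ^ (u - 1) * (1 - x) ^ (v - 1) : ℝ) : ℂ) := by
    intro x hx
    obtain ⟨hx0, hx1⟩ := hx
    rw [show ((u:ℂ) - 1) = ((u - 1 : ℝ) : ℂ) by push_cast; ring,
      show ((v:ℂ) - 1) = ((v - 1 : ℝ) : ℂ) by push_cast; ring,
      show (1 - (x:ℂ)) = ((1 - x : ℝ) : ℂ) by push_cast; ring,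
      ← Complex.ofReal_cpow hx0.le, ← Complex.ofReal_cpow (by linarith : (0:ℝ) ≤ 1 - x)]
    push_cast
    ring
  rw [setIntegral_congr_fun measurableSet_Ioo h1]
  exact integral_ofReal

lemma Gamma_mul_Gamma_eq_realBeta {u v : ℝ} (hu : 0 < u) (hv : 0 < v) :
    Real.Gamma u * Real.Gamma v = Real.Gamma (u + v) * realBeta u v := by
  have := Complex.Gamma_mul_Gamma_eq_betaIntegral (s := (u:ℂ)) (t := (v:ℂ))
    (by simpa using hu) (by simpa using hv)
  rw [complex_betaIntegral_eq u v hu hv] at this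
  rw [show ((u:ℂ) + v) = ((u + v : ℝ) : ℂ) by push_cast; ring] at this
  rw [Complex.Gamma_ofReal, Complex.Gamma_ofReal, Complex.Gamma_ofReal] at this
  exact_mod_cast this

lemma realBeta_pos {u v : ℝ} (hu : 0 < u) (hv : 0 < v) : 0 < realBeta u v := by
  have h := Gamma_mul_Gamma_eq_realBeta hu hv
  have h1 := Real.Gamma_pos_of_pos hu
  have h2 := Real.Gamma_pos_of_pos hv
  have h3 := Real.Gamma_pos_of_pos (by linarith : 0 < u + v)
  nlinarith [mul_pos h1 h2]

lemma realBeta_integrand_integrable {u v : ℝ} (hu : 0 < u) (hv : 0 < v) :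
    IntegrableOn (fun x : ℝ => x ^ (u - 1) * (1 - x) ^ (v - 1)) (Ioo 0 1) := by
  have h := Complex.betaIntegral_convergent (u := (u:ℂ)) (v := (v:ℂ))
    (by simpa using hu) (by simpa using hv)
  have h2 : IntegrableOn (fun x : ℝ => (x:ℂ) ^ ((u:ℂ) - 1) * (1 - (x:ℂ)) ^ ((v:ℂ) - 1))
      (Ioo 0 1) := by
    have := h.1
    rw [intervalIntegrable_iff_integrableOn_Ioo_of_le (by norm_num : (0:ℝ) ≤ 1)] at h
    exact h
  have h3 := h2.re
  refine MeasureTheory.IntegrableOn.congr_fun h3 ?_ measurableSet_Ioo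
  intro x hx
  obtain ⟨hx0, hx1⟩ := hx
  simp only
  rw [show ((u:ℂ) - 1) = ((u - 1 : ℝ) : ℂ) by push_cast; ring,
    show ((v:ℂ) - 1) = ((v - 1 : ℝ) : ℂ) by push_cast; ring,
    show (1 - (x:ℂ)) = ((1 - x : ℝ) : ℂ) by push_cast; ring,
    ← Complex.ofReal_cpow hx0.le, ← Complex.ofReal_cpow (by linarith : (0:ℝ) ≤ 1 - x)]
  rw [← Complex.ofReal_mul]
  simp

lemma realBeta_le_rpow_mul_rpow {u1 v1 u2 v2 a b : ℝ} (hu1 : 0 < u1) (hv1 : 0 < v1)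
    (hu2 : 0 < u2) (hv2 : 0 < v2) (ha : 0 < a) (hb : 0 < b) (hab : a + b = 1) :
    realBeta (a * u1 + b * u2) (a * v1 + b * v2) ≤
      realBeta u1 v1 ^ a * realBeta u2 v2 ^ b := by
  let f : ℝ → ℝ → ℝ → ℝ → ℝ := fun c u v x => x ^ (c * (u - 1)) * (1 - x) ^ (c * (v - 1))
  have e : Real.HolderConjugate (1 / a) (1 / b) := Real.holderConjugate_one_div ha hb hab
  have posf : ∀ c u v x : ℝ, x ∈ Ioo (0:ℝ) 1 → 0 ≤ f c u v x := fun c u v x hx =>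
    mul_nonneg (rpow_nonneg hx.1.le _) (rpow_nonneg (by linarith [hx.2]) _)
  have posf' : ∀ c u v : ℝ, ∀ᵐ x : ℝ ∂volume.restrict (Ioo 0 1), 0 ≤ f c u v x := fun c u v =>
    (ae_restrict_iff' measurableSet_Ioo).mpr (ae_of_all _ (posf c u v))
  have fpow : ∀ {c x : ℝ}, 0 < c → ∀ (u v : ℝ), x ∈ Ioo (0:ℝ) 1 →
      x ^ (u - 1) * (1 - x) ^ (v - 1) = f c u v x ^ (1 / c) := by
    intro c x hc u v hx
    dsimp only [f]
    rw [mul_rpow (rpow_nonneg hx.1.le _) (rpow_nonneg (by linarith [hx.2]) _),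
      ← rpow_mul hx.1.le, ← rpow_mul (by linarith [hx.2])]
    congr 2 <;> field_simp [hc.ne'] <;> ring
  have fmeas : ∀ c u v : ℝ,
      AEStronglyMeasurable (f c u v) (volume.restrict (Ioo 0 1)) := by
    intro c u v
    refine ContinuousOn.aestronglyMeasurable ?_ measurableSet_Ioo
    refine ContinuousOn.mul (continuousOn_of_forall_continuousAt fun x hx => ?_)
      (continuousOn_of_forall_continuousAt fun x hx => ?_)
    · exact continuousAt_rpow_const _ _ (Or.inl hx.1.ne')
    · exact (Real.continuousAt_rpow_const _ _
        (Or.inl (by linarith [hx.2] : (1:ℝ) - x ≠ 0))).comp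
        ((continuous_const.sub continuous_id).continuousAt)
  have f_mem_Lp : ∀ {c u v : ℝ}, 0 < c → 0 < u → 0 < v →
      MemLp (f c u v) (ENNReal.ofReal (1 / c)) (volume.restrict (Ioo 0 1)) := by
    intro c u v hc hu hv
    have A : ENNReal.ofReal (1 / c) ≠ 0 := by
      rwa [Ne, ENNReal.ofReal_eq_zero, not_le, one_div_pos]
    have B : ENNReal.ofReal (1 / c) ≠ ⊤ := ENNReal.ofReal_ne_top
    rw [← memLp_norm_rpow_iff _ A B, ENNReal.toReal_ofReal (one_div_nonneg.mpr hc.le),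
      ENNReal.div_self A B, memLp_one_iff_integrable]
    · apply Integrable.congr (realBeta_integrand_integrable hu hv)
      refine eventuallyEq_of_mem (self_mem_ae_restrict measurableSet_Ioo) fun x hx => ?_
      rw [fpow hc u v hx]
      congr 1
      exact (norm_of_nonneg (posf _ _ _ x hx)).symm
    · exact fmeas c u v
  have hst1 : 0 < a * u1 + b * u2 := by positivity
  have hst2 : 0 < a * v1 + b * v2 := by positivity
  rw [realBeta, realBeta, realBeta]
  convert MeasureTheory.integral_mul_le_Lp_mul_Lq_of_nonneg e (posf' a u1 v1) (posf' b u2 v2)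
    (f_mem_Lp ha hu1 hv1) (f_mem_Lp hb hu2 hv2) using 1
  · refine setIntegral_congr_fun measurableSet_Ioo fun x hx => ?_
    dsimp only [f]
    rw [show x ^ (a * u1 + b * u2 - 1) = x ^ (a * (u1 - 1)) * x ^ (b * (u2 - 1)) by
        rw [← rpow_add hx.1]; congr 1; nlinarith [hab],
      show (1 - x) ^ (a * v1 + b * v2 - 1) = (1 - x) ^ (a * (v1 - 1)) * (1 - x) ^ (b * (v2 - 1)) by
        rw [← rpow_add (by linarith [hx.2] : (0:ℝ) < 1 - x)]; congr 1; nlinarith [hab]]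
    ring
  · rw [one_div_one_div, one_div_one_div]
    congr 2 <;> exact setIntegral_congr_fun measurableSet_Ioo fun x hx => fpow (by assumption) _ _ hx

lemma log_Gamma_beta_eq {u v : ℝ} (hu : 0 < u) (hv : 0 < v) :
    Real.log (Real.Gamma u) + Real.log (Real.Gamma v) - Real.log (Real.Gamma (u + v)) =
      Real.log (realBeta u v) := by
  have h := Gamma_mul_Gamma_eq_realBeta hu hv
  have h1 := Real.Gamma_pos_of_pos hu
  have h2 := Real.Gamma_pos_of_pos hv
  have h3 := Real.Gamma_pos_of_pos (by linarith : 0 < u + v)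
  have hB := realBeta_pos hu hv
  have : Real.log (Real.Gamma u * Real.Gamma v) =
      Real.log (Real.Gamma (u + v) * realBeta u v) := by rw [h]
  rw [Real.log_mul h1.ne' h2.ne', Real.log_mul h3.ne' hB.ne'] at this
  linarith

lemma convexOn_logBeta :
    ConvexOn ℝ ((Ioi (0:ℝ)) ×ˢ (Ioi (0:ℝ)))
      (fun p : ℝ × ℝ =>
        Real.log (Real.Gamma p.1) + Real.log (Real.Gamma p.2) -
          Real.log (Real.Gamma (p.1 + p.2))) := by
  refine convexOn_iff_forall_pos.mpr ⟨(convex_Ioi _).prod (convex_Ioi _), ?_⟩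
  rintro ⟨u1, v1⟩ ⟨hu1, hv1⟩ ⟨u2, v2⟩ ⟨hu2, hv2⟩ a b ha hb hab
  simp only [mem_Ioi] at hu1 hv1 hu2 hv2
  have hcu : 0 < a * u1 + b * u2 := by positivity
  have hcv : 0 < a * v1 + b * v2 := by positivity
  simp only [Prod.smul_mk, Prod.mk_add_mk, smul_eq_mul]
  rw [log_Gamma_beta_eq hcu hcv, log_Gamma_beta_eq hu1 hv1, log_Gamma_beta_eq hu2 hv2]
  calc Real.log (realBeta (a * u1 + b * u2) (a * v1 + b * v2))
      ≤ Real.log (realBeta u1 v1 ^ a * realBeta u2 v2 ^ b) := by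
        apply Real.log_le_log (realBeta_pos hcu hcv)
        exact realBeta_le_rpow_mul_rpow hu1 hv1 hu2 hv2 ha hb hab
    _ = a * Real.log (realBeta u1 v1) + b * Real.log (realBeta u2 v2) := by
        rw [Real.log_mul (Real.rpow_pos_of_pos (realBeta_pos hu1 hv1) a).ne'
            (Real.rpow_pos_of_pos (realBeta_pos hu2 hv2) b).ne',
          Real.log_rpow (realBeta_pos hu1 hv1), Real.log_rpow (realBeta_pos hu2 hv2)]

lemma convex_posOrthant (K : ℕ) : Convex ℝ {x : Fin K → ℝ | ∀ i, 0 < x i} := by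
  have : {x : Fin K → ℝ | ∀ i, 0 < x i} = Set.pi univ (fun _ => Ioi (0:ℝ)) := by
    ext x; simp [Set.mem_pi]
  rw [this]
  exact convex_pi fun i _ => convex_Ioi 0

lemma convexOn_sum_logGamma (K : ℕ) :
    ConvexOn ℝ {x : Fin K → ℝ | ∀ i, 0 < x i}
      (fun a : Fin K → ℝ =>
        (∑ i, Real.log (Real.Gamma (a i))) - Real.log (Real.Gamma (∑ i, a i))) := by
  induction K with
  | zero =>
    have : (fun a : Fin 0 → ℝ =>
        (∑ i, Real.log (Real.Gamma (a i))) - Real.log (Real.Gamma (∑ i, a i))) =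
        fun _ => -Real.log (Real.Gamma 0) := by
      funext a; simp
    rw [this]
    exact convexOn_const _ (convex_posOrthant 0)
  | succ n IH =>
    rcases Nat.eq_zero_or_pos n with rfl | hn
    · have : (fun a : Fin 1 → ℝ =>
          (∑ i, Real.log (Real.Gamma (a i))) - Real.log (Real.Gamma (∑ i, a i))) =
          fun _ => (0:ℝ) := by
        funext a; simp [Fin.sum_univ_one]
      rw [this]
      exact convexOn_const _ (convex_posOrthant 1)
    · have hne : Nonempty (Fin n) := Fin.pos_iff_nonempty.mp hn
      set L : (Fin (n+1) → ℝ) →ₗ[ℝ] ℝ × ℝ :=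
        LinearMap.prod (LinearMap.proj 0)
          (∑ i : Fin n, LinearMap.proj (R := ℝ) (φ := fun _ : Fin (n+1) => ℝ) i.succ) with hL
      set M : (Fin (n+1) → ℝ) →ₗ[ℝ] (Fin n → ℝ) := LinearMap.funLeft ℝ ℝ Fin.succ with hM
      have hLapp : ∀ a : Fin (n+1) → ℝ, L a = (a 0, ∑ i : Fin n, a i.succ) := by
        intro a
        simp [hL, LinearMap.sum_apply, LinearMap.proj_apply]
      have hMapp : ∀ a : Fin (n+1) → ℝ, M a = fun i : Fin n => a i.succ := by
        intro a; rfl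
      have h1 := convexOn_logBeta.comp_affineMap L.toAffineMap
      have h2 := IH.comp_affineMap M.toAffineMap
      have hsub1 : {x : Fin (n+1) → ℝ | ∀ i, 0 < x i} ⊆
          L.toAffineMap ⁻¹' ((Ioi (0:ℝ)) ×ˢ (Ioi (0:ℝ))) := by
        intro x hx
        simp only [Set.mem_preimage, LinearMap.coe_toAffineMap, hLapp, Set.mem_prod, mem_Ioi]
        exact ⟨hx 0, Finset.sum_pos (fun i _ => hx i.succ) Finset.univ_nonempty⟩
      have hsub2 : {x : Fin (n+1) → ℝ | ∀ i, 0 < x i} ⊆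
          M.toAffineMap ⁻¹' {x : Fin n → ℝ | ∀ i, 0 < x i} := by
        intro x hx
        simp only [Set.mem_preimage, LinearMap.coe_toAffineMap, hMapp, Set.mem_setOf_eq]
        exact fun i => hx i.succ
      have h3 := (h1.subset hsub1 (convex_posOrthant (n+1))).add
        (h2.subset hsub2 (convex_posOrthant (n+1)))
      refine h3.congr ?_
      intro a _
      simp only [Pi.add_apply, Function.comp_apply, LinearMap.coe_toAffineMap, hLapp, hMapp]
      simp only [Fin.sum_univ_succ]
      ring

lemma convexOn_negLogDirichlet {K : ℕ} (c : Fin K → ℝ) :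
    ConvexOn ℝ {x : Fin K → ℝ | ∀ i, 0 < x i} (negLogDirichlet c) := by
  set ℓ : (Fin K → ℝ) →ₗ[ℝ] ℝ :=
    ∑ i : Fin K, (-(Real.log (c i))) • (LinearMap.proj (R := ℝ) (φ := fun _ : Fin K => ℝ) i)
    with hℓ
  have hℓapp : ∀ a : Fin K → ℝ, ℓ a = ∑ i, -(Real.log (c i)) * a i := by
    intro a; simp [hℓ, LinearMap.sum_apply, LinearMap.proj_apply]
  have hconv := ((convexOn_sum_logGamma K).add
    (ℓ.convexOn (convex_posOrthant K))).add
    (convexOn_const (∑ i, Real.log (c i)) (convex_posOrthant K))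
  refine hconv.congr ?_
  intro a _
  simp only [negLogDirichlet, Pi.add_apply, hℓapp]
  have h : ∑ i, (a i - 1) * Real.log (c i) =
      (∑ i, a i * Real.log (c i)) - ∑ i, Real.log (c i) := by
    rw [← Finset.sum_sub_distrib]
    congr 1; funext i; ring
  rw [h]
  have h2 : ∑ i, -(Real.log (c i)) * a i = -∑ i, a i * Real.log (c i) := by
    rw [← Finset.sum_neg_distrib]
    congr 1; funext i; ring
  rw [h2]
  ring

lemma quadform_nonneg {K : ℕ} (a : Fin K → ℝ) (ha : ∀ i, 0 < a i) (x : Fin K → ℝ) :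
    0 ≤ (∑ i, trigamma (a i) * x i ^ 2) - trigamma (∑ k, a k) * (∑ i, x i) ^ 2 := by
  rcases Nat.eq_zero_or_pos K with rfl | hK
  · simp
  have hne : Nonempty (Fin K) := Fin.pos_iff_nonempty.mp hK
  set s : ℝ := ∑ k, a k with hs_def
  have hs : 0 < s := Finset.sum_pos (fun i _ => ha i) Finset.univ_nonempty
  set T : ℝ := ∑ i, x i with hT_def
  set δ : ℝ := Finset.univ.inf' Finset.univ_nonempty (fun i => a i / (|x i| + 1)) with hδ_def
  have hδ : 0 < δ := by
    rw [hδ_def, Finset.lt_inf'_iff]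
    intro i _
    have h1 : 0 < |x i| + 1 := by positivity
    exact div_pos (ha i) h1
  have hpos : ∀ t : ℝ, |t| < δ → ∀ i, 0 < a i + t * x i := by
    intro t ht i
    have h1 : δ ≤ a i / (|x i| + 1) := Finset.inf'_le _ (Finset.mem_univ i)
    have h2 : |t * x i| < a i := by
      rw [abs_mul]
      calc |t| * |x i| ≤ |t| * (|x i| + 1) := by
            apply mul_le_mul_of_nonneg_left (by linarith) (abs_nonneg t)
        _ < δ * (|x i| + 1) := by
            apply mul_lt_mul_of_pos_right ht (by positivity)
        _ ≤ (a i / (|x i| + 1)) * (|x i| + 1) := by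
            apply mul_le_mul_of_nonneg_right h1 (by positivity)
        _ = a i := by field_simp
    have := neg_abs_le (t * x i)
    linarith [abs_lt.mp h2 |>.1]
  have hsum_pos : ∀ t : ℝ, |t| < δ → 0 < s + t * T := by
    intro t ht
    have : s + t * T = ∑ i, (a i + t * x i) := by
      rw [Finset.sum_add_distrib, ← Finset.mul_sum, hs_def, hT_def]
    rw [this]
    exact Finset.sum_pos (fun i _ => hpos t ht i) Finset.univ_nonempty
  -- the function g along the line a + t x, and its derivative φ
  set g : ℝ → ℝ := fun t =>
    (∑ i, Real.log (Real.Gamma (a i + t * x i))) -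
      Real.log (Real.Gamma (∑ i, (a i + t * x i))) with hg_def
  set φ : ℝ → ℝ := fun t =>
    (∑ i, digamma (a i + t * x i) * x i) - digamma (s + t * T) * T with hφ_def
  -- affine path
  have hline : ∀ i : Fin K, ∀ t : ℝ, (AffineMap.lineMap a (a + x) : ℝ →ᵃ[ℝ] (Fin K → ℝ)) t i
      = a i + t * x i := by
    intro i t
    simp [AffineMap.lineMap_apply]
    ring
  have hgconv : ConvexOn ℝ (Ioo (-δ) δ) g := by
    have h1 := (convexOn_sum_logGamma K).comp_affineMap
      (AffineMap.lineMap a (a + x) : ℝ →ᵃ[ℝ] (Fin K → ℝ))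
    have hsub : Ioo (-δ) δ ⊆
        (AffineMap.lineMap a (a + x) : ℝ →ᵃ[ℝ] (Fin K → ℝ)) ⁻¹'
          {y : Fin K → ℝ | ∀ i, 0 < y i} := by
      intro t ht i
      rw [hline i t]
      exact hpos t (abs_lt.mpr ⟨ht.1, ht.2⟩) i
    refine ((h1.subset hsub (convex_Ioo _ _)).congr ?_)
    intro t _
    simp only [Function.comp_apply, hg_def]
    have hsum : ∑ i, (AffineMap.lineMap a (a + x) : ℝ →ᵃ[ℝ] (Fin K → ℝ)) t i
        = ∑ i, (a i + t * x i) := Finset.sum_congr rfl fun i _ => hline i t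
    rw [hsum]
    congr 1
    exact Finset.sum_congr rfl fun i _ => by rw [hline i t]
  -- derivative of g is φ on the interval
  have hgderiv : ∀ t ∈ Ioo (-δ) δ, HasDerivAt g (φ t) t := by
    intro t ht
    have habs : |t| < δ := abs_lt.mpr ⟨ht.1, ht.2⟩
    have h1 : HasDerivAt (fun u : ℝ => ∑ i, Real.log (Real.Gamma (a i + u * x i)))
        (∑ i, digamma (a i + t * x i) * x i) t := by
      apply HasDerivAt.fun_sum
      intro i _
      have haff : HasDerivAt (fun u : ℝ => a i + u * x i) (x i) t :=
        (hasDerivAt_mul_const (x i)).const_add (a i)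
      exact (hasDerivAt_logGamma' (hpos t habs i)).comp t haff
    have h2 : HasDerivAt (fun u : ℝ => Real.log (Real.Gamma (∑ i, (a i + u * x i))))
        (digamma (s + t * T) * T) t := by
      have hsum_eq : ∀ u : ℝ, (∑ i, (a i + u * x i)) = s + u * T := by
        intro u
        rw [Finset.sum_add_distrib, ← Finset.mul_sum, hs_def, hT_def]
      have haff : HasDerivAt (fun u : ℝ => s + u * T) T t :=
        (hasDerivAt_mul_const T).const_add s
      have := (hasDerivAt_logGamma' (hsum_pos t habs)).comp t haff
      simp only [Function.comp_def] at this
      simpa only [hsum_eq] using this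
    exact h1.sub h2
  -- derivative of φ at 0 is the quadratic form
  have hQ : HasDerivAt φ
      ((∑ i, trigamma (a i) * x i ^ 2) - trigamma s * T ^ 2) 0 := by
    have h1 : HasDerivAt (fun u : ℝ => ∑ i, digamma (a i + u * x i) * x i)
        (∑ i, trigamma (a i) * x i ^ 2) 0 := by
      apply HasDerivAt.fun_sum
      intro i _
      have haff : HasDerivAt (fun u : ℝ => a i + u * x i) (x i) 0 :=
        (hasDerivAt_mul_const (x i)).const_add (a i)
      have hd : HasDerivAt digamma (trigamma (a i)) (a i + 0 * x i) := by
        rw [show a i + 0 * x i = a i by ring]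
        exact hasDerivAt_digamma (ha i)
      have := (hd.comp 0 haff).mul_const (x i)
      simpa [pow_two, mul_assoc] using this
    have h2 : HasDerivAt (fun u : ℝ => digamma (s + u * T) * T)
        (trigamma s * T ^ 2) 0 := by
      have haff : HasDerivAt (fun u : ℝ => s + u * T) T 0 :=
        (hasDerivAt_mul_const T).const_add s
      have hd : HasDerivAt digamma (trigamma s) (s + 0 * T) := by
        rw [show s + 0 * T = s by ring]
        exact hasDerivAt_digamma hs
      have := (hd.comp 0 haff).mul_const T
      simpa [pow_two, mul_assoc] using this
    exact h1.sub h2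
  -- monotonicity of φ from convexity
  have hmono : ∀ t ∈ Ioo (0:ℝ) δ, φ 0 ≤ φ t := by
    intro t ht
    have h0 : (0:ℝ) ∈ Ioo (-δ) δ := by constructor <;> [linarith; linarith]
    have hti : t ∈ Ioo (-δ) δ := ⟨by linarith [ht.1], ht.2⟩
    calc φ 0 ≤ slope g 0 t :=
          hgconv.le_slope_of_hasDerivAt h0 hti ht.1 (hgderiv 0 h0)
      _ ≤ φ t := hgconv.slope_le_of_hasDerivAt h0 hti ht.1 (hgderiv t hti)
  -- conclude the second derivative is nonnegative
  have htends : Tendsto (slope φ 0) (nhdsWithin 0 (Ioi 0))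
      (nhds ((∑ i, trigamma (a i) * x i ^ 2) - trigamma s * T ^ 2)) := by
    have := hasDerivAt_iff_tendsto_slope.mp hQ
    exact this.mono_left (nhdsWithin_mono 0 (fun y hy => ne_of_gt hy))
  refine ge_of_tendsto htends ?_
  filter_upwards [Ioo_mem_nhdsGT hδ] with t ht
  rw [slope_def_field]
  have h1 : φ 0 ≤ φ t := hmono t ht
  have h2 : 0 < t := ht.1
  rw [div_eq_mul_inv]
  have h3 : 0 ≤ φ t - φ 0 := by linarith
  exact mul_nonneg h3 (inv_nonneg.mpr (by linarith))

lemma psd_part {K : ℕ} (a : Fin K → ℝ) (ha : ∀ i, 0 < a i) :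
    (Matrix.of fun i j : Fin K =>
      trigamma (a i) * (if i = j then 1 else 0) - trigamma (∑ k, a k)).PosSemidef := by
  refine Matrix.posSemidef_iff_dotProduct_mulVec.mpr ⟨?_, ?_⟩
  · rw [Matrix.IsHermitian]
    ext i j
    simp only [Matrix.conjTranspose_apply, Matrix.of_apply, star_trivial]
    by_cases h : i = j
    · subst h; simp
    · rw [if_neg h, if_neg (Ne.symm h)]
      ring
  · intro x
    have key := quadform_nonneg a ha x
    have hexp : dotProduct (star x) (Matrix.mulVec (Matrix.of fun i j : Fin K =>
        trigamma (a i) * (if i = j then 1 else 0) - trigamma (∑ k, a k)) x) =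
        (∑ i, trigamma (a i) * x i ^ 2) - trigamma (∑ k, a k) * (∑ i, x i) ^ 2 := by
      simp only [star_trivial, dotProduct, Matrix.mulVec, Matrix.of_apply,
        dotProduct]
      have hrow : ∀ i : Fin K,
          (∑ j, (trigamma (a i) * (if i = j then 1 else 0) - trigamma (∑ k, a k)) * x j)
          = trigamma (a i) * x i - trigamma (∑ k, a k) * (∑ j, x j) := by
        intro i
        rw [show (fun j => (trigamma (a i) * (if i = j then 1 else 0) - trigamma (∑ k, a k)) * x j)
            = fun j => ((if i = j then trigamma (a i) * x j else 0) -
              trigamma (∑ k, a k) * x j) from funext fun j => by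
          by_cases h : i = j <;> simp [h] <;> ring]
        rw [Finset.sum_sub_distrib, Finset.sum_ite_eq Finset.univ i (fun j => trigamma (a i) * x j)
          , if_pos (Finset.mem_univ i), ← Finset.mul_sum]
      calc ∑ i, x i * ∑ j, (trigamma (a i) * (if i = j then 1 else 0) - trigamma (∑ k, a k)) * x j
          = ∑ i, (trigamma (a i) * x i ^ 2 - x i * (trigamma (∑ k, a k) * (∑ j, x j))) := by
            refine Finset.sum_congr rfl fun i _ => ?_
            rw [hrow i]; ring
        _ = (∑ i, trigamma (a i) * x i ^ 2) - trigamma (∑ k, a k) * (∑ i, x i) ^ 2 := by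
            rw [Finset.sum_sub_distrib, ← Finset.sum_mul]
            ring
    rw [hexp]
    exact key

end Aux

/-- The Hessian of the negative log Dirichlet density in the parameters has (i,j) entry
ψ'(aᵢ)1(i=j) - ψ'(∑ₖ aₖ), this matrix is positive semidefinite, and the negative log
Dirichlet density is convex in a. -/
theorem negLogDirichlet_hessian_psd_convex (K : ℕ) (c a : Fin K → ℝ)
    (hc : ∀ i, 0 < c i) (hc1 : ∑ i, c i = 1) (ha : ∀ i, 0 < a i) :
    (∀ i j : Fin K,
      HasDerivAt
        (fun t =>
          digamma (Function.update a j t i) - digamma (∑ k, Function.update a j t k) -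
            Real.log (c i))
        (trigamma (a i) * (if i = j then 1 else 0) - trigamma (∑ k, a k)) (a j)) ∧
    (Matrix.of fun i j : Fin K =>
        trigamma (a i) * (if i = j then 1 else 0) - trigamma (∑ k, a k)).PosSemidef ∧
    ConvexOn ℝ {x : Fin K → ℝ | ∀ i, 0 < x i} (negLogDirichlet c) :=
  ⟨fun i j => part1_deriv c a ha i j, psd_part a ha, convexOn_negLogDirichlet c⟩
end
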